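/- arXiv:1709.05181 — 7 statements merged into one kernel-verified Lean document; each statement's English description precedes it below -/
import Mathlib

section
/- Let c > 0. There exists a unique x* ∈ (0, 1/c) such that e^{4cx*}(1/c − x*) = 1/c + x*. Moreover e^{4cx}(1/c − x) > 1/c + x for all x ∈ (0, x*) and e^{4cx}(1/c − x) < 1/c + x for all x ∈ (x*, 1/c). -/
/-!
Taking logarithms, the equation reads `g x = 0` for `g x = log (r + x) - log (r - x) - 4 c x`
with `r = 1/c`, and the two inequalities read `g x < 0` and `0 < g x`. The derivative
`2 r / (r² - x²) - 4 c` increases on `[0, r)`, so `g` is strictly convex there, with `g 0 = 0`,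
`g (r/2) < 0` and `g (0.99 r) > 0`. Since `g 0 = 0`, the secant slope `g x / x` is strictly
increasing, hence `g` changes sign exactly once on `(0, r)`.
-/

open Real Set

theorem StrictConvexOn.exists_sign_change_of_map_left_eq_zero {f : ℝ → ℝ} {a b p q : ℝ}
    (hf : StrictConvexOn ℝ (Ico a b) f) (ha : f a = 0) (hp : p ∈ Ioo a b) (hfp : f p < 0)
    (hq : q ∈ Ioo a b) (hfq : 0 < f q) :
    ∃ z ∈ Ioo a b, f z = 0 ∧ (∀ x ∈ Ioo a z, f x < 0) ∧
      (∀ x ∈ Ioo z b, 0 < f x) := by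
  have hcont : ContinuousOn f (Ioo a b) := by
    simpa only [interior_Ico] using hf.convexOn.continuousOn_interior
  have hpq : uIcc p q ⊆ Ioo a b := ordConnected_Ioo.uIcc_subset hp hq
  obtain ⟨z, hz, hfz⟩ :=
    intermediate_value_uIcc (hcont.mono hpq) (mem_uIcc_of_le hfp.le hfq.le)
  have hzI := hpq hz
  have haI : a ∈ Ico a b := left_mem_Ico.2 (hzI.1.trans hzI.2)
  have slope {x y} (hx : x ∈ Ioo a b) (hy : y ∈ Ioo a b) (hxy : x < y) :
      f x / (x - a) < f y / (y - a) := by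
    simpa only [ha, sub_zero] using hf.secant_strict_mono haI (Ioo_subset_Ico_self hx)
      (Ioo_subset_Ico_self hy) hx.1.ne' hy.1.ne' hxy
  refine ⟨z, hzI, hfz, fun x hx => ?_, fun x hx => ?_⟩
  · have := slope ⟨hx.1, hx.2.trans hzI.2⟩ hzI hx.2
    rwa [hfz, zero_div, div_lt_iff₀ (sub_pos.2 hx.1), zero_mul] at this
  · have := slope hzI ⟨hzI.1.trans hx.1, hx.2⟩ hx.1
    rwa [hfz, zero_div, lt_div_iff₀ (sub_pos.2 (hzI.1.trans hx.1)), zero_mul] at this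

theorem hasDerivAt_log_add_sub_log_sub {r x : ℝ} (hx : x ∈ Ioo (-r) r) :
    HasDerivAt (fun x => log (r + x) - log (r - x)) (2 * r / (r ^ 2 - x ^ 2)) x := by
  have h₁ : 0 < r + x := by linarith [hx.1]
  have h₂ : 0 < r - x := by linarith [hx.2]
  refine ((((hasDerivAt_id x).const_add r).log h₁.ne').sub
    (((hasDerivAt_id x).const_sub r).log h₂.ne')).congr_deriv ?_
  rw [id, show r ^ 2 - x ^ 2 = (r + x) * (r - x) by ring]
  field_simp
  ring

theorem strictConvexOn_log_add_sub_log_sub_mul (r k : ℝ) :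
    StrictConvexOn ℝ (Ico 0 r) (fun x => log (r + x) - log (r - x) - k * x) := by
  have hderiv {x} (hx : x ∈ Ico 0 r) := hasDerivAt_log_add_sub_log_sub (r := r) (x := x)
    ⟨by linarith [hx.1, hx.1.trans_lt hx.2], hx.2⟩
  refine StrictConvexOn.sub_concaveOn (f := fun x => log (r + x) - log (r - x)) ?_
    ((LinearMap.mulLeft ℝ k).concaveOn (convex_Ico 0 r))
  refine StrictMonoOn.strictConvexOn_of_deriv (convex_Ico 0 r)
    (fun x hx => (hderiv hx).continuousAt.continuousWithinAt) ?_
  rw [interior_Ico]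
  intro x hx y hy hxy
  rw [(hderiv (Ioo_subset_Ico_self hx)).deriv, (hderiv (Ioo_subset_Ico_self hy)).deriv]
  have hr : 0 < r := hx.1.trans hx.2
  have hy₂ : 0 < r ^ 2 - y ^ 2 := by nlinarith [hy.1, hy.2]
  gcongr
  exact hx.1.le

noncomputable def thresholdGap (c x : ℝ) : ℝ := log (1 / c + x) - log (1 / c - x) - 4 * c * x

section

variable {c x : ℝ} (h₁ : 0 < 1 / c + x) (h₂ : 0 < 1 / c - x)
include h₁ h₂

theorem thresholdGap_neg_iff : thresholdGap c x < 0 ↔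
    1 / c + x < exp (4 * c * x) * (1 / c - x) := by
  rw [thresholdGap, sub_neg, ← log_div h₁.ne' h₂.ne', log_lt_iff_lt_exp (div_pos h₁ h₂),
    div_lt_iff₀ h₂]

theorem thresholdGap_pos_iff : 0 < thresholdGap c x ↔
    exp (4 * c * x) * (1 / c - x) < 1 / c + x := by
  rw [thresholdGap, sub_pos, ← log_div h₁.ne' h₂.ne', lt_log_iff_exp_lt (div_pos h₁ h₂),
    lt_div_iff₀ h₂]

theorem thresholdGap_eq_zero_iff : thresholdGap c x = 0 ↔
    exp (4 * c * x) * (1 / c - x) = 1 / c + x := by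
  rw [thresholdGap, sub_eq_zero, ← log_div h₁.ne' h₂.ne', eq_comm, ← exp_eq_exp,
    exp_log (div_pos h₁ h₂), eq_div_iff h₂.ne']

end

theorem exists_thresholdGap_neg {c : ℝ} (hc : 0 < c) : ∃ p ∈ Ioo 0 (1 / c), thresholdGap c p < 0 := by
  refine ⟨1 / 2 / c, ⟨by positivity, by gcongr; norm_num⟩, ?_⟩
  rw [thresholdGap_neg_iff (by positivity) (by rw [← sub_div]; positivity)]
  rw [show 4 * c * (1 / 2 / c) = 2 by field_simp; norm_num, ← add_div, ← sub_div]
  rw [div_lt_iff₀ hc, mul_div_assoc', div_mul_cancel₀ _ hc.ne']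
  linarith [add_one_lt_exp two_ne_zero]

theorem exists_thresholdGap_pos {c : ℝ} (hc : 0 < c) : ∃ q ∈ Ioo 0 (1 / c), 0 < thresholdGap c q := by
  refine ⟨99 / 100 / c, ⟨by positivity, by gcongr; norm_num⟩, ?_⟩
  rw [thresholdGap_pos_iff (by positivity) (by rw [← sub_div]; positivity)]
  rw [show 4 * c * (99 / 100 / c) = 99 / 25 by field_simp; norm_num, ← add_div, ← sub_div]
  rw [lt_div_iff₀ hc, mul_div_assoc', div_mul_cancel₀ _ hc.ne']
  have : exp (99 / 25) < 81 := calc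
    exp (99 / 25) < exp 1 ^ 4 := by rw [← exp_nat_mul]; gcongr; norm_num
    _ < 3 ^ 4 := by gcongr; exact exp_one_lt_three
    _ = 81 := by norm_num
  linarith

/-- For `c > 0` there is a unique `x* ∈ (0, 1/c)` with
`e^{4cx*}(1/c − x*) = 1/c + x*`; moreover `e^{4cx}(1/c − x) > 1/c + x` on `(0, x*)`
and `e^{4cx}(1/c − x) < 1/c + x` on `(x*, 1/c)`. -/
theorem stmt_2 (c : ℝ) (hc : 0 < c) :
    ∃ xs : ℝ, xs ∈ Set.Ioo 0 (1/c) ∧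
      Real.exp (4 * c * xs) * (1/c - xs) = 1/c + xs ∧
      (∀ y ∈ Set.Ioo (0:ℝ) (1/c),
        Real.exp (4 * c * y) * (1/c - y) = 1/c + y → y = xs) ∧
      (∀ x ∈ Set.Ioo (0:ℝ) xs,
        Real.exp (4 * c * x) * (1/c - x) > 1/c + x) ∧
      (∀ x ∈ Set.Ioo xs (1/c),
        Real.exp (4 * c * x) * (1/c - x) < 1/c + x) := by
  have hconv : StrictConvexOn ℝ (Ico 0 (1 / c)) (thresholdGap c) :=
    strictConvexOn_log_add_sub_log_sub_mul (1 / c) (4 * c)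
  obtain ⟨p, hp, hgp⟩ := exists_thresholdGap_neg hc
  obtain ⟨q, hq, hgq⟩ := exists_thresholdGap_pos hc
  obtain ⟨z, hz, hgz, hneg, hpos⟩ :=
    hconv.exists_sign_change_of_map_left_eq_zero (by simp [thresholdGap]) hp hgp hq hgq
  have hbound {x} (hx : x ∈ Ioo 0 (1 / c)) : 0 < 1 / c + x ∧ 0 < 1 / c - x :=
    ⟨add_pos (one_div_pos.2 hc) hx.1, sub_pos.2 hx.2⟩
  refine ⟨z, hz, (thresholdGap_eq_zero_iff (hbound hz).1 (hbound hz).2).1 hgz,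
    fun y hy hyz => ?_, fun x hx => ?_, fun x hx => ?_⟩
  · have hgy := (thresholdGap_eq_zero_iff (hbound hy).1 (hbound hy).2).2 hyz
    rcases lt_trichotomy y z with h | h | h
    · exact absurd hgy (hneg y ⟨hy.1, h⟩).ne
    · exact h
    · exact absurd hgy (hpos y ⟨h, hy.2⟩).ne'
  · have hx' : x ∈ Ioo 0 (1 / c) := ⟨hx.1, hx.2.trans hz.2⟩
    exact (thresholdGap_neg_iff (hbound hx').1 (hbound hx').2).1 (hneg x hx)
  · have hx' : x ∈ Ioo 0 (1 / c) := ⟨hz.1.trans hx.1, hx.2⟩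
    exact (thresholdGap_pos_iff (hbound hx').1 (hbound hx').2).1 (hpos x hx)
end

section
/- Let c > 0 and let x* ∈ (0, 1/c) be the unique solution in (0,1/c) of e^{4cx}(1/c − x) = 1/c + x. Then for every y with x* < y ≤ 1/c there exists a unique x ∈ (0, y) satisfying e^{2cx}(1/c − x) = e^{−2cy}(1/c + x), and this solution satisfies x* < x < y. -/
/-!
Dividing by `1/c + x`, the equation for `x` reads `G x = e^{-2cy}` with
`G x = e^{2cx}(1/c - x)/(1/c + x)`, and the equation for `x*` reads `G x* = e^{-2cx*}`.
Since `G' x = -2c x² e^{2cx}/(1/c + x)²`, `G` decreases strictly on `[0, ∞)` from `G 0 = 1`.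
As `x*` is the only root of `e^{4cx}(1/c - x) = 1/c + x` in `(0, 1/c)` and at `x = 1/c` the two
sides are `0 < 2/c`, the left side is smaller on `(x*, 1/c]`, i.e. `G y < e^{-2cy}` there.
The intermediate value theorem on `[0, y]` then gives the solution, monotonicity of `G` its
uniqueness, and `G x = e^{-2cy} < e^{-2cx*} = G x*` gives `x* < x`.
-/

open Real Set

noncomputable def boundaryRatio (c x : ℝ) : ℝ :=
  exp (2 * c * x) * (1 / c - x) / (1 / c + x)

lemma boundaryRatio_zero {c : ℝ} (hc : c ≠ 0) : boundaryRatio c 0 = 1 := by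
  simp [boundaryRatio, hc]

lemma boundaryRatio_eq_iff {c x t : ℝ} (hc : 0 < c) (hx : 0 ≤ x) :
    boundaryRatio c x = t ↔ exp (2 * c * x) * (1 / c - x) = t * (1 / c + x) :=
  div_eq_iff (by positivity)

lemma boundaryRatio_eq_exp_neg_mul (c x : ℝ) :
    boundaryRatio c x = exp (-(2 * c * x)) * (exp (4 * c * x) * (1 / c - x) / (1 / c + x)) := by
  rw [boundaryRatio, ← mul_div_assoc, ← mul_assoc, ← exp_add]
  ring_nf

lemma boundaryRatio_lt_exp_neg_iff {c x : ℝ} (hc : 0 < c) (hx : 0 ≤ x) :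
    boundaryRatio c x < exp (-(2 * c * x)) ↔ exp (4 * c * x) * (1 / c - x) < 1 / c + x := by
  rw [boundaryRatio_eq_exp_neg_mul, mul_lt_iff_lt_one_right (exp_pos _),
    div_lt_one₀ (by positivity)]

lemma boundaryRatio_eq_exp_neg_iff {c x : ℝ} (hc : 0 < c) (hx : 0 ≤ x) :
    boundaryRatio c x = exp (-(2 * c * x)) ↔ exp (4 * c * x) * (1 / c - x) = 1 / c + x := by
  rw [boundaryRatio_eq_exp_neg_mul, mul_eq_left₀ (exp_pos _).ne',
    div_eq_one_iff_eq (by positivity)]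

lemma hasDerivAt_boundaryRatio {c x : ℝ} (hc : c ≠ 0) (hx : 1 / c + x ≠ 0) :
    HasDerivAt (boundaryRatio c) (-(2 * c * x ^ 2 * exp (2 * c * x)) / (1 / c + x) ^ 2) x := by
  have hexp : HasDerivAt (fun x => exp (2 * c * x)) (exp (2 * c * x) * (2 * c)) x := by
    simpa using ((hasDerivAt_id x).const_mul (2 * c)).exp
  refine ((hexp.mul ((hasDerivAt_id x).const_sub (1 / c))).div
    ((hasDerivAt_id x).const_add (1 / c)) hx).congr_deriv ?_
  simp only [id, Pi.mul_apply]
  field_simp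
  ring

lemma one_div_add_pos {c x : ℝ} (hc : 0 < c) (hx : x ∈ Ici 0) : 0 < 1 / c + x := by
  have := hx.out
  positivity

lemma continuousOn_boundaryRatio {c : ℝ} (hc : 0 < c) :
    ContinuousOn (boundaryRatio c) (Ici 0) := fun _ hx =>
  (hasDerivAt_boundaryRatio hc.ne' (one_div_add_pos hc hx).ne').continuousAt.continuousWithinAt

lemma strictAntiOn_boundaryRatio {c : ℝ} (hc : 0 < c) :
    StrictAntiOn (boundaryRatio c) (Ici 0) := by
  refine strictAntiOn_of_deriv_neg (convex_Ici 0) (continuousOn_boundaryRatio hc) fun x hx => ?_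
  rw [interior_Ici] at hx
  have hx' : x ∈ Ici 0 := mem_Ici.2 (le_of_lt hx)
  rw [(hasDerivAt_boundaryRatio hc.ne' (one_div_add_pos hc hx').ne').deriv]
  have hnum : 0 < 2 * c * x ^ 2 * exp (2 * c * x) := by
    have := hx.out
    positivity
  exact div_neg_of_neg_of_pos (neg_neg_of_pos hnum) (pow_pos (one_div_add_pos hc hx') 2)

lemma exp_four_mul_mul_sub_lt_of_unique_root {c xs w : ℝ} (hc : 0 < c) (hxs : 0 ≤ xs)
    (huniq : ∀ z ∈ Ioo (0 : ℝ) (1 / c), exp (4 * c * z) * (1 / c - z) = 1 / c + z → z = xs)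
    (hw : xs < w) (hwc : w ≤ 1 / c) : exp (4 * c * w) * (1 / c - w) < 1 / c + w := by
  by_contra! hle
  let g : ℝ → ℝ := fun z => 1 / c + z - exp (4 * c * z) * (1 / c - z)
  have hgc : ContinuousOn g (Icc w (1 / c)) := by fun_prop
  have hg0 : (0 : ℝ) ∈ Ico (g w) (g (1 / c)) :=
    ⟨by simp only [g]; linarith, by simp [g]; positivity⟩
  obtain ⟨z, hz, hgz⟩ := intermediate_value_Ico hwc hgc hg0
  have hzxs := huniq z ⟨by linarith [hz.1], hz.2⟩ (by simp only [g] at hgz; linarith)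
  linarith [hz.1]

/-- One-step lemma for the boundary recursion: if `x* ∈ (0,1/c)` is the unique
solution there of `e^{4cx}(1/c − x) = 1/c + x`, then for every `y` with
`x* < y ≤ 1/c` there is a unique `x ∈ (0, y)` with
`e^{2cx}(1/c − x) = e^{−2cy}(1/c + x)`, and it satisfies `x* < x < y`. -/
theorem stmt_3 (c xs : ℝ) (hc : 0 < c) (hxs : xs ∈ Set.Ioo 0 (1/c))
    (heq : Real.exp (4 * c * xs) * (1/c - xs) = 1/c + xs)
    (huniq : ∀ z ∈ Set.Ioo (0:ℝ) (1/c),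
      Real.exp (4 * c * z) * (1/c - z) = 1/c + z → z = xs) :
    ∀ y : ℝ, xs < y → y ≤ 1/c →
      ∃ x : ℝ, x ∈ Set.Ioo 0 y ∧
        Real.exp (2 * c * x) * (1/c - x) = Real.exp (-(2 * c * y)) * (1/c + x) ∧
        (∀ z ∈ Set.Ioo (0:ℝ) y,
          Real.exp (2 * c * z) * (1/c - z) = Real.exp (-(2 * c * y)) * (1/c + z) →
            z = x) ∧
        xs < x ∧ x < y := by
  intro y hxy hyc
  have hxs0 : 0 ≤ xs := hxs.1.le
  have hy0 : 0 < y := hxs.1.trans hxy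
  have hGy : boundaryRatio c y < exp (-(2 * c * y)) := (boundaryRatio_lt_exp_neg_iff hc hy0.le).2 <|
    exp_four_mul_mul_sub_lt_of_unique_root hc hxs0 huniq hxy hyc
  have hG0 : exp (-(2 * c * y)) < boundaryRatio c 0 := by
    rw [boundaryRatio_zero hc.ne', exp_lt_one_iff, neg_lt_zero]
    positivity
  obtain ⟨x, hx, hGx⟩ := intermediate_value_Ioo' hy0.le
    ((continuousOn_boundaryRatio hc).mono Icc_subset_Ici_self) ⟨hGy, hG0⟩
  have hGxs : boundaryRatio c xs = exp (-(2 * c * xs)) :=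
    (boundaryRatio_eq_exp_neg_iff hc hxs0).2 heq
  refine ⟨x, hx, (boundaryRatio_eq_iff hc hx.1.le).1 hGx, fun z hz hzx => ?_, ?_, hx.2⟩
  · exact (strictAntiOn_boundaryRatio hc).injOn hz.1.le hx.1.le
      (((boundaryRatio_eq_iff hc hz.1.le).2 hzx).trans hGx.symm)
  · refine (strictAntiOn_boundaryRatio hc).lt_iff_gt hx.1.le hxs0 |>.1 ?_
    rw [hGx, hGxs, exp_lt_exp]
    gcongr
end

section
/- Let c > 0 and let x* ∈ (0, 1/c) be the unique solution in (0,1/c) of e^{4cx}(1/c − x) = 1/c + x. There exists a sequence (x_n)_{n≥1} with x_1 = 1/c such that for every n ≥ 1, x_{n+1} ∈ (0, x_n) and e^{2c x_{n+1}}(1/c − x_{n+1}) = e^{−2c x_n}(1/c + x_{n+1}); any such sequence satisfies x_n > x* for all n, is strictly decreasing, and converges to x*. -/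
open Real Filter

/-- The forward-iteration thresholds: starting from `x₁ = 1/c` and recursively
taking `x_{n+1} ∈ (0, x_n)` with `e^{2c x_{n+1}}(1/c − x_{n+1}) = e^{−2c x_n}(1/c + x_{n+1})`,
such a sequence exists, and any such sequence stays above `x*`, is strictly
decreasing, and converges to `x*`, the unique solution in `(0,1/c)` of
`e^{4cx}(1/c − x) = 1/c + x`. -/
theorem stmt_4 (c xs : ℝ) (hc : 0 < c) (hxs : xs ∈ Set.Ioo 0 (1/c))
    (heq : Real.exp (4 * c * xs) * (1/c - xs) = 1/c + xs)
    (huniq : ∀ z ∈ Set.Ioo (0:ℝ) (1/c),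
      Real.exp (4 * c * z) * (1/c - z) = 1/c + z → z = xs) :
    (∃ x : ℕ → ℝ, x 1 = 1/c ∧ ∀ n : ℕ, 1 ≤ n →
      x (n+1) ∈ Set.Ioo 0 (x n) ∧
      Real.exp (2 * c * x (n+1)) * (1/c - x (n+1)) =
        Real.exp (-(2 * c * x n)) * (1/c + x (n+1))) ∧
    (∀ x : ℕ → ℝ,
      (x 1 = 1/c ∧ ∀ n : ℕ, 1 ≤ n →
        x (n+1) ∈ Set.Ioo 0 (x n) ∧
        Real.exp (2 * c * x (n+1)) * (1/c - x (n+1)) =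
          Real.exp (-(2 * c * x n)) * (1/c + x (n+1))) →
      (∀ n : ℕ, 1 ≤ n → xs < x n) ∧
      (∀ n : ℕ, 1 ≤ n → x (n+1) < x n) ∧
      Tendsto x atTop (nhds xs)) := by
  obtain ⟨hxs0, hxs1⟩ := hxs
  have hb : (0:ℝ) < 1/c := by positivity
  have hcb : c * (1/c) = 1 := by field_simp
  have hcont : Continuous (fun z : ℝ => Real.exp (4*c*z) * (1/c - z) - (1/c + z)) := by
    fun_prop
  -- the function e^{4cz}(1/c - z) - (1/c + z) is positive on (0, 1/(2c))
  have hsmall : ∀ a : ℝ, 0 < a → 2*a < 1/c →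
      1/c + a < Real.exp (4*c*a) * (1/c - a) := by
    intro a ha ha2
    have h1 : 4*c*a + 1 < Real.exp (4*c*a) := Real.add_one_lt_exp (by positivity)
    have hca : 0 < 1/c - a := by linarith
    have h2 : c*(2*a) < 1 := by
      calc c*(2*a) < c*(1/c) := by exact mul_lt_mul_of_pos_left ha2 hc
        _ = 1 := hcb
    have key : (4*c*a + 1) * (1/c - a) = 1/c + 3*a - 4*c*a^2 := by
      field_simp; ring
    have h3 : c*(2*a)*a < 1*a := mul_lt_mul_of_pos_right h2 ha
    have h4 : 1/c + a < (4*c*a+1)*(1/c - a) := by rw [key]; nlinarith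
    have h5 : (4*c*a+1)*(1/c - a) < Real.exp (4*c*a)*(1/c - a) :=
      mul_lt_mul_of_pos_right h1 hca
    linarith
  -- it is negative on (xs, 1/c)
  have hneg : ∀ a : ℝ, xs < a → a < 1/c →
      Real.exp (4*c*a) * (1/c - a) < 1/c + a := by
    intro a ha1 ha2
    by_contra h
    push_neg at h
    rcases eq_or_lt_of_le h with heq' | hlt
    · have := huniq a ⟨lt_trans hxs0 ha1, ha2⟩ heq'.symm
      linarith
    · have hfa : (0:ℝ) < Real.exp (4*c*a) * (1/c - a) - (1/c + a) := by linarith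
      have hfb : Real.exp (4*c*(1/c)) * (1/c - 1/c) - (1/c + 1/c) < 0 := by
        simp; positivity
      obtain ⟨z, hz, hfz⟩ := intermediate_value_Ioo' (le_of_lt ha2)
        hcont.continuousOn (Set.mem_Ioo.mpr ⟨hfb, hfa⟩)
      have hz' : Real.exp (4*c*z) * (1/c - z) = 1/c + z := by
        have : Real.exp (4*c*z) * (1/c - z) - (1/c + z) = 0 := hfz
        linarith
      have := huniq z ⟨lt_trans (lt_trans hxs0 ha1) hz.1, hz.2⟩ hz'
      linarith [hz.1]
  -- negativity forces being above xs
  have hgt : ∀ y : ℝ, 0 < y → y < 1/c →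
      Real.exp (4*c*y) * (1/c - y) < 1/c + y → xs < y := by
    intro y hy0 hy1 hy2
    by_contra h
    push_neg at h
    set ε := min (1/(4*c)) (y/2) with hε
    have hε0 : 0 < ε := lt_min (by positivity) (by linarith)
    have hεy : ε < y := lt_of_le_of_lt (min_le_right _ _) (by linarith)
    have hhalf : (1:ℝ)/(2*c) < 1/c := by
      rw [div_lt_div_iff₀ (by positivity) hc]; linarith
    have hε2 : 2*ε < 1/c := by
      have : ε ≤ 1/(4*c) := min_le_left _ _
      calc 2*ε ≤ 2*(1/(4*c)) := by linarith
        _ = 1/(2*c) := by ring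
        _ < 1/c := hhalf
    have hfε := hsmall ε hε0 hε2
    obtain ⟨z, hz, hfz⟩ := intermediate_value_Ioo' (le_of_lt hεy)
      hcont.continuousOn (Set.mem_Ioo.mpr
        ⟨show Real.exp (4*c*y) * (1/c - y) - (1/c + y) < 0 by linarith,
         show (0:ℝ) < Real.exp (4*c*ε) * (1/c - ε) - (1/c + ε) by linarith⟩)
    have hz' : Real.exp (4*c*z) * (1/c - z) = 1/c + z := by
      have : Real.exp (4*c*z) * (1/c - z) - (1/c + z) = 0 := hfz
      linarith
    have := huniq z ⟨lt_trans hε0 hz.1, lt_trans hz.2 hy1⟩ hz'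
    linarith [hz.2]
  -- one step of the iteration: existence of the next threshold
  have step : ∀ a : ℝ, ∃ y : ℝ, xs < a → a ≤ 1/c →
      y ∈ Set.Ioo 0 a ∧
      Real.exp (2*c*y) * (1/c - y) = Real.exp (-(2*c*a)) * (1/c + y) := by
    intro a
    by_cases h : xs < a ∧ a ≤ 1/c
    · obtain ⟨ha1, ha2⟩ := h
      have ha0 : 0 < a := lt_trans hxs0 ha1
      have hgcont : Continuous
          (fun z : ℝ => Real.exp (2*c*z) * (1/c - z) - Real.exp (-(2*c*a)) * (1/c + z)) := by
        fun_prop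
      have hg0 : (0:ℝ) < Real.exp (2*c*0) * (1/c - 0) - Real.exp (-(2*c*a)) * (1/c + 0) := by
        have h1 : Real.exp (-(2*c*a)) < 1 := Real.exp_lt_one_iff.mpr (by nlinarith)
        have h2 : Real.exp (-(2*c*a)) * (1/c) < 1 * (1/c) :=
          mul_lt_mul_of_pos_right h1 hb
        simp only [mul_zero, Real.exp_zero, sub_zero, add_zero, one_mul] at *
        linarith
      have hga : Real.exp (2*c*a) * (1/c - a) - Real.exp (-(2*c*a)) * (1/c + a) < 0 := by
        have hkey : Real.exp (4*c*a) * (1/c - a) < 1/c + a := by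
          rcases lt_or_eq_of_le ha2 with h' | h'
          · exact hneg a ha1 h'
          · rw [h']; simp; positivity
        have e1 : Real.exp (2*c*a) * Real.exp (2*c*a) = Real.exp (4*c*a) := by
          rw [← Real.exp_add]; ring_nf
        have e2 : Real.exp (2*c*a) * Real.exp (-(2*c*a)) = 1 := by
          rw [← Real.exp_add]; simp
        have := mul_lt_mul_of_pos_left hkey (Real.exp_pos (-(2*c*a)))
        nlinarith [Real.exp_pos (2*c*a), Real.exp_pos (-(2*c*a)),
          mul_pos (Real.exp_pos (2*c*a)) (Real.exp_pos (-(2*c*a)))]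
      obtain ⟨y, hy, hgy⟩ := intermediate_value_Ioo' (le_of_lt ha0)
        hgcont.continuousOn (Set.mem_Ioo.mpr ⟨hga, hg0⟩)
      refine ⟨y, fun _ _ => ⟨hy, ?_⟩⟩
      have : Real.exp (2*c*y) * (1/c - y) - Real.exp (-(2*c*a)) * (1/c + y) = 0 := hgy
      linarith
    · exact ⟨xs, fun h1 h2 => absurd ⟨h1, h2⟩ h⟩
  -- any solution of one step lies above xs
  have sol_gt : ∀ a y : ℝ, xs < a → a ≤ 1/c → y ∈ Set.Ioo 0 a →
      Real.exp (2*c*y) * (1/c - y) = Real.exp (-(2*c*a)) * (1/c + y) → xs < y := by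
    rintro a y ha1 ha2 ⟨hy0, hya⟩ heqy
    apply hgt y hy0 (lt_of_lt_of_le hya ha2)
    have e1 : Real.exp (4*c*y) = Real.exp (2*c*y) * Real.exp (2*c*y) := by
      rw [← Real.exp_add]; ring_nf
    have e2 : Real.exp (2*c*y) * Real.exp (-(2*c*a)) = Real.exp (2*c*y - 2*c*a) := by
      rw [← Real.exp_add]; ring_nf
    have hlt : Real.exp (2*c*y - 2*c*a) < 1 := Real.exp_lt_one_iff.mpr (by nlinarith)
    calc Real.exp (4*c*y) * (1/c - y)
        = Real.exp (2*c*y) * (Real.exp (2*c*y) * (1/c - y)) := by rw [e1, mul_assoc]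
      _ = Real.exp (2*c*y) * (Real.exp (-(2*c*a)) * (1/c + y)) := by rw [heqy]
      _ = Real.exp (2*c*y - 2*c*a) * (1/c + y) := by rw [← mul_assoc, e2]
      _ < 1 * (1/c + y) := mul_lt_mul_of_pos_right hlt (by linarith)
      _ = 1/c + y := one_mul _
  choose f hf using step
  constructor
  · -- existence of the sequence
    refine ⟨fun n => Nat.rec (1/c) (fun k xk => if k = 0 then 1/c else f xk) n, ?_, ?_⟩
    · norm_num
    · set x : ℕ → ℝ := fun n => Nat.rec (1/c) (fun k xk => if k = 0 then 1/c else f xk) n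
        with hxdef
      have hx1 : x 1 = 1/c := by norm_num [hxdef]
      have hxsucc : ∀ n : ℕ, 1 ≤ n → x (n+1) = f (x n) := by
        intro n hn
        have hne : n ≠ 0 := Nat.one_le_iff_ne_zero.mp hn
        show (if n = 0 then 1/c else f (x n)) = f (x n)
        simp [hne]
      have inv : ∀ n : ℕ, 1 ≤ n → xs < x n ∧ x n ≤ 1/c := by
        intro n hn
        induction n, hn using Nat.le_induction with
        | base => rw [hx1]; exact ⟨hxs1, le_rfl⟩
        | succ n hn ih =>
          rw [hxsucc n hn]
          obtain ⟨hio, heqn⟩ := hf (x n) ih.1 ih.2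
          exact ⟨sol_gt (x n) (f (x n)) ih.1 ih.2 hio heqn,
            le_trans hio.2.le ih.2⟩
      intro n hn
      obtain ⟨hinv1, hinv2⟩ := inv n hn
      obtain ⟨hio, heqn⟩ := hf (x n) hinv1 hinv2
      rw [hxsucc n hn]
      refine ⟨hio, ?_⟩
      convert heqn using 2 <;> ring
  · -- properties of any such sequence
    rintro x ⟨hx1, hx⟩
    have inv : ∀ n : ℕ, 1 ≤ n → xs < x n ∧ x n ≤ 1/c := by
      intro n hn
      induction n, hn using Nat.le_induction with
      | base => rw [hx1]; exact ⟨hxs1, le_rfl⟩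
      | succ n hn ih =>
        obtain ⟨hio, heqn⟩ := hx n hn
        have heqn' : Real.exp (2*c*x (n+1)) * (1/c - x (n+1)) =
            Real.exp (-(2*c*x n)) * (1/c + x (n+1)) := by
          convert heqn using 2 <;> ring
        exact ⟨sol_gt (x n) (x (n+1)) ih.1 ih.2 hio heqn',
          le_trans hio.2.le ih.2⟩
    refine ⟨fun n hn => (inv n hn).1, fun n hn => (hx n hn).1.2, ?_⟩
    have hanti : Antitone (fun n => x (n+1)) :=
      antitone_nat_of_succ_le (fun n => (hx (n+1) (Nat.le_add_left 1 n)).1.2.le)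
    have hbdd : BddBelow (Set.range (fun n : ℕ => x (n+1))) := by
      refine ⟨xs, ?_⟩
      rintro _ ⟨n, rfl⟩
      exact (inv (n+1) (Nat.le_add_left 1 n)).1.le
    have hty : Tendsto (fun n : ℕ => x (n+1)) atTop (nhds (⨅ n : ℕ, x (n+1))) :=
      tendsto_atTop_ciInf hanti hbdd
    set L := ⨅ n : ℕ, x (n+1) with hL
    have hxsL : xs ≤ L := le_ciInf (fun n => (inv (n+1) (Nat.le_add_left 1 n)).1.le)
    have hL0 : 0 < L := lt_of_lt_of_le hxs0 hxsL
    have hL1 : L < 1/c := by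
      have h1 : L ≤ x 2 := ciInf_le hbdd 1
      have h2 : x 2 < x 1 := (hx 1 le_rfl).1.2
      rw [hx1] at h2
      linarith
    have hty' : Tendsto (fun n : ℕ => x (n+2)) atTop (nhds L) :=
      hty.comp (tendsto_add_atTop_nat 1)
    have hc1 : Continuous (fun z : ℝ => Real.exp (2*c*z) * (1/c - z)) := by fun_prop
    have hc2 : Continuous (fun z : ℝ => Real.exp (-(2*c*z)) ) := by fun_prop
    have t1 : Tendsto (fun n : ℕ => Real.exp (2*c*x (n+2)) * (1/c - x (n+2))) atTop
        (nhds (Real.exp (2*c*L) * (1/c - L))) := (hc1.tendsto L).comp hty'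
    have t2 : Tendsto (fun n : ℕ => Real.exp (-(2*c*x (n+1))) * (1/c + x (n+2))) atTop
        (nhds (Real.exp (-(2*c*L)) * (1/c + L))) :=
      ((hc2.tendsto L).comp hty).mul (tendsto_const_nhds.add hty')
    have hEq : (fun n : ℕ => Real.exp (2*c*x (n+2)) * (1/c - x (n+2)))
        = fun n : ℕ => Real.exp (-(2*c*x (n+1))) * (1/c + x (n+2)) := by
      funext n
      have := (hx (n+1) (Nat.le_add_left 1 n)).2
      convert this using 2 <;> ring
    rw [hEq] at t1
    have hlim : Real.exp (-(2*c*L)) * (1/c + L) = Real.exp (2*c*L) * (1/c - L) := by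
      have := tendsto_nhds_unique t1 t2
      linarith [this]
    have e1 : Real.exp (2*c*L) * Real.exp (2*c*L) = Real.exp (4*c*L) := by
      rw [← Real.exp_add]; ring_nf
    have e2 : Real.exp (2*c*L) * Real.exp (-(2*c*L)) = 1 := by
      rw [← Real.exp_add]; simp
    have hLeq : Real.exp (4 * c * L) * (1/c - L) = 1/c + L := by
      calc Real.exp (4*c*L) * (1/c - L)
          = Real.exp (2*c*L) * (Real.exp (2*c*L) * (1/c - L)) := by rw [← mul_assoc, e1]
        _ = Real.exp (2*c*L) * (Real.exp (-(2*c*L)) * (1/c + L)) := by rw [← hlim]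
        _ = (Real.exp (2*c*L) * Real.exp (-(2*c*L))) * (1/c + L) := by ring
        _ = 1/c + L := by rw [e2, one_mul]
    have hLxs : L = xs := huniq L ⟨hL0, hL1⟩ hLeq
    rw [← hLxs]
    exact (tendsto_add_atTop_iff_nat 1).mp hty
end

section
/- Let c > 0 and let x* ∈ (0, 1/c) satisfy e^{4cx*}(1/c − x*) = 1/c + x*. Define f(x) = (1/2) e^{cx*}(x* − 1/c) e^{−cx} + (1/2) e^{−cx*}(x* + 1/c) e^{cx} for x ∈ ℝ. Then f(−x*) = 0, f(x*) = x*, f′(x*) = 1, and f″(x) = c² f(x) for all x ∈ ℝ; in particular, if c = √(2r) with r > 0 then (1/2) f″(x) − r f(x) = 0 for all x. -/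
open Real

/-- The candidate equilibrium value function
`f(x) = (1/2)e^{cx*}(x* − 1/c)e^{−cx} + (1/2)e^{−cx*}(x* + 1/c)e^{cx}`
satisfies the boundary condition `f(−x*) = 0`, value matching `f(x*) = x*`,
smooth fit `f′(x*) = 1`, the ODE `f″ = c² f`, and hence `(1/2)f″ − r f = 0`
when `c = √(2r)`, `r > 0`. -/
theorem stmt_6 (c xs : ℝ) (hc : 0 < c) (hxs : xs ∈ Set.Ioo 0 (1/c))
    (heq : Real.exp (4 * c * xs) * (1/c - xs) = 1/c + xs)
    (f : ℝ → ℝ)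
    (hf : ∀ x : ℝ, f x = (1/2) * Real.exp (c * xs) * (xs - 1/c) * Real.exp (-(c * x))
      + (1/2) * Real.exp (-(c * xs)) * (xs + 1/c) * Real.exp (c * x)) :
    f (-xs) = 0 ∧ f xs = xs ∧ deriv f xs = 1 ∧
    (∀ x : ℝ, deriv (deriv f) x = c ^ 2 * f x) ∧
    (∀ r : ℝ, 0 < r → c = Real.sqrt (2 * r) →
      ∀ x : ℝ, (1/2) * deriv (deriv f) x - r * f x = 0) := by
  set A : ℝ := (1/2) * Real.exp (c * xs) * (xs - 1/c) with hA
  set B : ℝ := (1/2) * Real.exp (-(c * xs)) * (xs + 1/c) with hB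
  have hd1 : ∀ x : ℝ, HasDerivAt f (-c * A * Real.exp (-(c * x)) + c * B * Real.exp (c * x)) x := by
    intro x
    have h1 : HasDerivAt (fun x : ℝ => Real.exp (-(c * x))) (-c * Real.exp (-(c * x))) x := by
      have := (((hasDerivAt_id x).const_mul c).neg).exp
      simpa [mul_comm] using this
    have h2 : HasDerivAt (fun x : ℝ => Real.exp (c * x)) (c * Real.exp (c * x)) x := by
      have := ((hasDerivAt_id x).const_mul c).exp
      simpa [mul_comm] using this
    have : HasDerivAt (fun x : ℝ => A * Real.exp (-(c * x)) + B * Real.exp (c * x))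
        (A * (-c * Real.exp (-(c * x))) + B * (c * Real.exp (c * x))) x :=
      (h1.const_mul A).add (h2.const_mul B)
    have heqf : f = fun x : ℝ => A * Real.exp (-(c * x)) + B * Real.exp (c * x) := by
      funext y; exact hf y
    rw [heqf]
    convert this using 1; ring
  have hderiv1 : deriv f = fun x => -c * A * Real.exp (-(c * x)) + c * B * Real.exp (c * x) := by
    funext x; exact (hd1 x).deriv
  have hd2 : ∀ x : ℝ, HasDerivAt (deriv f)
      (c^2 * A * Real.exp (-(c * x)) + c^2 * B * Real.exp (c * x)) x := by
    intro x
    have h1 : HasDerivAt (fun x : ℝ => Real.exp (-(c * x))) (-c * Real.exp (-(c * x))) x := by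
      have := (((hasDerivAt_id x).const_mul c).neg).exp
      simpa [mul_comm] using this
    have h2 : HasDerivAt (fun x : ℝ => Real.exp (c * x)) (c * Real.exp (c * x)) x := by
      have := ((hasDerivAt_id x).const_mul c).exp
      simpa [mul_comm] using this
    have : HasDerivAt (fun x : ℝ => -c * A * Real.exp (-(c * x)) + c * B * Real.exp (c * x))
        ((-c * A) * (-c * Real.exp (-(c * x))) + (c * B) * (c * Real.exp (c * x))) x :=
      (h1.const_mul (-c * A)).add (h2.const_mul (c * B))
    rw [hderiv1]
    convert this using 1; ring
  have hderiv2 : ∀ x : ℝ, deriv (deriv f) x = c ^ 2 * f x := by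
    intro x
    rw [(hd2 x).deriv, hf x]
    ring
  have hEF : Real.exp (c * xs) * Real.exp (-(c * xs)) = 1 := by
    rw [← Real.exp_add]; simp
  have hboundary : f (-xs) = 0 := by
    rw [hf, hA, hB]
    have h4 : Real.exp (4 * c * xs) = Real.exp (c * xs) * Real.exp (c * xs) * Real.exp (c * xs) * Real.exp (c * xs) := by
      rw [← Real.exp_add, ← Real.exp_add, ← Real.exp_add]; ring_nf
    rw [h4] at heq
    have e1 : Real.exp (-(c * -xs)) = Real.exp (c * xs) := by ring_nf
    have e2 : Real.exp (c * -xs) = Real.exp (-(c * xs)) := by ring_nf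
    rw [e1, e2]
    linear_combination (-1/2) * Real.exp (-(c*xs)) * Real.exp (-(c*xs)) * heq
      - (1/2) * Real.exp (c*xs) * Real.exp (c*xs) * (xs - 1/c) * (Real.exp (c*xs) * Real.exp (-(c*xs)) + 1) * hEF
  refine ⟨hboundary, ?_, ?_, hderiv2, ?_⟩
  · rw [hf, hA, hB]
    linear_combination xs * hEF
  · rw [hderiv1]
    simp only [hA, hB]
    have hinv : (1/c) * c = 1 := by field_simp
    linear_combination c * (1/c) * hEF + hinv
  · intro r hr hcr x
    have hc2 : c ^ 2 = 2 * r := by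
      rw [hcr, sq_sqrt (by linarith)]
    rw [hderiv2 x, hc2]
    ring
end

section
/- Let c > 0 and let x* ∈ (0, 1/c) satisfy e^{4cx*}(1/c − x*) = 1/c + x*. Define f(x) = (1/2) e^{cx*}(x* − 1/c) e^{−cx} + (1/2) e^{−cx*}(x* + 1/c) e^{cx}. Then f(x) > 0 for every x > −x*, f is strictly convex on [−x*, ∞), and f(x) > x for every x ∈ (−x*, x*). -/
open Real

/-!
The fixed-point equation for `x*` makes the two exponential coefficients of `f` proportional, so
that `f x = K sinh (c (x + x*))` with `K = (x* + 1/c) e^{-2cx*} > 0`. Hence `f` vanishes at `-x*`,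
is positive and strictly convex to its right, and satisfies the smooth-fit conditions
`f x* = x*`, `f' x* = 1`. The tangent line of `f` at `x*` is therefore the identity, which a
strictly convex function strictly dominates away from the point of tangency.
-/

open Set

lemma StrictConvexOn.add_mul_sub_lt_of_hasDerivAt {S : Set ℝ} {f : ℝ → ℝ} {x y f' : ℝ}
    (hfc : StrictConvexOn ℝ S f) (hx : x ∈ S) (hy : y ∈ S) (hxy : x < y)
    (hf' : HasDerivAt f f' y) : f y + f' * (x - y) < f x := by
  have hslope := hfc.slope_lt_of_hasDerivAt hx hy hxy hf'
  rw [slope_def_field, div_lt_iff₀ (sub_pos.2 hxy)] at hslope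
  linarith

section ScaledSinh

variable (K c a : ℝ)

lemma hasDerivAt_mul_sinh_mul_add (x : ℝ) :
    HasDerivAt (fun y => K * sinh (c * (y + a))) (K * c * cosh (c * (x + a))) x := by
  have hlin : HasDerivAt (fun y => c * (y + a)) c x := by
    simpa using ((hasDerivAt_id x).add_const a).const_mul c
  exact (hlin.sinh.const_mul K).congr_deriv (by ring)

variable {K c}

lemma strictConvexOn_mul_sinh_mul_add (hK : 0 < K) (hc : 0 < c) :
    StrictConvexOn ℝ (Ici (-a)) (fun x => K * sinh (c * (x + a))) := by
  refine StrictMonoOn.strictConvexOn_of_deriv (convex_Ici _) (by fun_prop) ?_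
  rw [interior_Ici]
  intro x hx y hy hxy
  have hx' : 0 ≤ c * (x + a) := mul_nonneg hc.le (by linarith [mem_Ioi.1 hx])
  have hy' : 0 ≤ c * (y + a) := mul_nonneg hc.le (by linarith [mem_Ioi.1 hy])
  have hcosh := cosh_strictMonoOn hx' hy' (by gcongr)
  simp only [(hasDerivAt_mul_sinh_mul_add K c a _).deriv]
  gcongr

end ScaledSinh

section OptimisticValue

variable {c xs : ℝ}

lemma exp_pow_four_mul_one_sub_eq (hc : c ≠ 0)
    (heq : exp (4 * c * xs) * (1/c - xs) = 1/c + xs) :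
    exp (c * xs) ^ 4 * (1 - c * xs) = 1 + c * xs := by
  have h4 : exp (c * xs) ^ 4 = exp (4 * c * xs) := by rw [← exp_nat_mul]; ring_nf
  field_simp at heq
  rw [h4]
  linear_combination heq

lemma value_eq_mul_sinh (hc : c ≠ 0) (heq : exp (4 * c * xs) * (1/c - xs) = 1/c + xs) (x : ℝ) :
    (1/2) * exp (c * xs) * (xs - 1/c) * exp (-(c * x))
      + (1/2) * exp (-(c * xs)) * (xs + 1/c) * exp (c * x)
      = (xs + 1/c) * exp (-(2 * c * xs)) * sinh (c * (x + xs)) := by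
  have h2 : exp (2 * c * xs) = exp (c * xs) ^ 2 := by rw [← exp_nat_mul]; ring_nf
  have hsum : exp (c * (x + xs)) = exp (c * x) * exp (c * xs) := by rw [mul_add, exp_add]
  rw [sinh_eq, exp_neg (c * (x + xs)), hsum]
  simp only [exp_neg, h2]
  field_simp
  linear_combination -exp_pow_four_mul_one_sub_eq hc heq

lemma smoothFit_value_eq (hc : c ≠ 0) (heq : exp (4 * c * xs) * (1/c - xs) = 1/c + xs) :
    (xs + 1/c) * exp (-(2 * c * xs)) * sinh (c * (xs + xs)) = xs := by
  have h2 : exp (2 * c * xs) = exp (c * xs) ^ 2 := by rw [← exp_nat_mul]; ring_nf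
  have h4 := exp_pow_four_mul_one_sub_eq hc heq
  have hu := exp_pos (c * xs)
  rw [sinh_eq, exp_neg, exp_neg, show c * (xs + xs) = 2 * c * xs by ring, h2]
  generalize exp (c * xs) = u at hu h4 ⊢
  field_simp
  linear_combination h4

lemma smoothFit_deriv_eq (hc : c ≠ 0) (heq : exp (4 * c * xs) * (1/c - xs) = 1/c + xs) :
    (xs + 1/c) * exp (-(2 * c * xs)) * c * cosh (c * (xs + xs)) = 1 := by
  have h2 : exp (2 * c * xs) = exp (c * xs) ^ 2 := by rw [← exp_nat_mul]; ring_nf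
  have h4 := exp_pow_four_mul_one_sub_eq hc heq
  have hu := exp_pos (c * xs)
  rw [cosh_eq, exp_neg, exp_neg, show c * (xs + xs) = 2 * c * xs by ring, h2]
  generalize exp (c * xs) = u at hu h4 ⊢
  field_simp
  linear_combination -h4

end OptimisticValue

/-- The candidate equilibrium value function
`f(x) = (1/2)e^{cx*}(x* − 1/c)e^{−cx} + (1/2)e^{−cx*}(x* + 1/c)e^{cx}` is positive
for `x > −x*`, strictly convex on `[−x*, ∞)`, and strictly dominates the reward
`x` on the continuation region `(−x*, x*)`. -/
theorem stmt_7 (c xs : ℝ) (hc : 0 < c) (hxs : xs ∈ Set.Ioo 0 (1/c))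
    (heq : Real.exp (4 * c * xs) * (1/c - xs) = 1/c + xs)
    (f : ℝ → ℝ)
    (hf : ∀ x : ℝ, f x = (1/2) * Real.exp (c * xs) * (xs - 1/c) * Real.exp (-(c * x))
      + (1/2) * Real.exp (-(c * xs)) * (xs + 1/c) * Real.exp (c * x)) :
    (∀ x : ℝ, -xs < x → 0 < f x) ∧
    StrictConvexOn ℝ (Set.Ici (-xs)) f ∧
    (∀ x ∈ Set.Ioo (-xs) xs, x < f x) := by
  obtain ⟨hxs0, -⟩ := hxs
  set K := (xs + 1/c) * exp (-(2 * c * xs))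
  have hK : 0 < K := mul_pos (add_pos hxs0 (one_div_pos.2 hc)) (exp_pos _)
  obtain rfl : f = fun x => K * sinh (c * (x + xs)) :=
    funext fun x => (hf x).trans (value_eq_mul_sinh hc.ne' heq x)
  have hconv := strictConvexOn_mul_sinh_mul_add xs hK hc
  refine ⟨fun x hx => mul_pos hK (sinh_pos_iff.2 (mul_pos hc (by linarith))), hconv, ?_⟩
  rintro x ⟨hx_left, hx_right⟩
  have htangent := hconv.add_mul_sub_lt_of_hasDerivAt (mem_Ici.2 hx_left.le)
    (mem_Ici.2 (by linarith)) hx_right (hasDerivAt_mul_sinh_mul_add K c xs xs)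
  rw [smoothFit_value_eq hc.ne' heq, smoothFit_deriv_eq hc.ne' heq] at htangent
  linarith
end

section
/- Let r > 0 and c = √(2r). Define v : ℝ → ℝ by v(x) = (1/(ec)) e^{cx} for x < 1/c and v(x) = x for x ≥ 1/c. Then v is continuously differentiable on ℝ, v is convex, v(x) ≥ max(x, 0) for all x with strict inequality for x < 1/c, (1/2) v″(x) − r v(x) = 0 for x < 1/c, and (1/2) v″(x) − r v(x) = −r x < 0 for x > 1/c. -/
/-!
Writing `v x = exp (c x - 1) / c` below `1 / c`, both pieces and their first derivatives agree at
`1 / c`, so `v` is `C¹` with `v' x = min (exp (c x - 1)) 1`, which is monotone; hence `v` is convex.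
Domination below `1 / c` is the tangent-line inequality `y < exp (y - 1)` for `y ≠ 1`, and the
harmonicity of the exponential piece is `c ^ 2 = 2 r`.
-/

open Real Filter Topology

section Pasting

variable {f g f' g' : ℝ → ℝ} {b x : ℝ}

theorem ite_lt_eventuallyEq_left (hx : x < b) :
    (fun y => if y < b then f y else g y) =ᶠ[𝓝 x] f := by
  filter_upwards [Iio_mem_nhds hx] with y hy
  exact if_pos hy

theorem ite_lt_eventuallyEq_right (hx : b < x) :
    (fun y => if y < b then f y else g y) =ᶠ[𝓝 x] g := by
  filter_upwards [Ioi_mem_nhds hx] with y hy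
  exact if_neg (not_lt.2 hy.le)

theorem hasDerivAt_ite_lt (hf : ∀ y, HasDerivAt f (f' y) y) (hg : ∀ y, HasDerivAt g (g' y) y)
    (hfg : f b = g b) (hfg' : f' b = g' b) (x : ℝ) :
    HasDerivAt (fun y => if y < b then f y else g y) (if x < b then f' x else g' x) x := by
  rcases lt_trichotomy x b with hx | rfl | hx
  · rw [if_pos hx]
    exact (hf x).congr_of_eventuallyEq (ite_lt_eventuallyEq_left hx)
  · have h_left : HasDerivWithinAt (fun y => if y < x then f y else g y) (g' x) (Set.Iic x) x := by
      refine hfg' ▸ (hf x).hasDerivWithinAt.congr (fun y hy => ?_) (by simp [hfg])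
      rcases (Set.mem_Iic.1 hy).lt_or_eq with hy | rfl
      · simp [hy]
      · simp [hfg]
    have h_right : HasDerivWithinAt (fun y => if y < x then f y else g y) (g' x) (Set.Ici x) x :=
      (hg x).hasDerivWithinAt.congr (fun y hy => by simp [not_lt.2 (Set.mem_Ici.1 hy)]) (by simp)
    rw [if_neg (lt_irrefl x)]
    simpa [Set.Iic_union_Ici] using h_left.union h_right
  · rw [if_neg (not_lt.2 hx.le)]
    exact (hg x).congr_of_eventuallyEq (ite_lt_eventuallyEq_right hx)

end Pasting

/-- The paper's `v₀(·, y)`, with `a₁ e^{cx} = e^{cx}/(ec)` written as `e^{cx-1}/c`. -/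
noncomputable def valueFn (c x : ℝ) : ℝ :=
  if x < 1 / c then exp (c * x - 1) / c else x

section ValueFunction

variable {c x : ℝ}

theorem valueFn_of_lt (hx : x < 1 / c) : valueFn c x = exp (c * x - 1) / c := if_pos hx

theorem valueFn_of_ge (hx : 1 / c ≤ x) : valueFn c x = x := if_neg (not_lt.2 hx)

theorem hasDerivAt_exp_mul_sub_one_div (hc : c ≠ 0) (x : ℝ) :
    HasDerivAt (fun y => exp (c * y - 1) / c) (exp (c * x - 1)) x := by
  refine ((((hasDerivAt_id' x).const_mul c).sub_const 1).exp.div_const c).congr_deriv ?_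
  field_simp

theorem hasDerivAt_valueFn (hc : c ≠ 0) (x : ℝ) :
    HasDerivAt (valueFn c) (if x < 1 / c then exp (c * x - 1) else 1) x := by
  have h_at : c * (1 / c) - 1 = 0 := by field_simp; ring
  exact hasDerivAt_ite_lt (hasDerivAt_exp_mul_sub_one_div hc) hasDerivAt_id
    (by rw [h_at, exp_zero]; rfl) (by rw [h_at, exp_zero]) x

theorem deriv_valueFn (hc : c ≠ 0) :
    deriv (valueFn c) = fun x => if x < 1 / c then exp (c * x - 1) else 1 :=
  funext fun x => (hasDerivAt_valueFn hc x).deriv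

theorem deriv_valueFn_eq_min (hc : 0 < c) :
    deriv (valueFn c) = fun x => min (exp (c * x - 1)) 1 := by
  rw [deriv_valueFn hc.ne']
  ext x
  have h_iff : x < 1 / c ↔ c * x - 1 < 0 := by
    rw [lt_div_iff₀ hc, mul_comm]
    exact sub_neg.symm
  split_ifs with hx
  · exact (min_eq_left (exp_lt_one_iff.2 (h_iff.1 hx)).le).symm
  · exact (min_eq_right (one_le_exp (not_lt.1 (h_iff.not.1 hx)))).symm

theorem differentiable_valueFn (hc : c ≠ 0) : Differentiable ℝ (valueFn c) :=
  fun x => (hasDerivAt_valueFn hc x).differentiableAt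

theorem contDiff_valueFn (hc : 0 < c) : ContDiff ℝ 1 (valueFn c) :=
  contDiff_one_iff_deriv.2 ⟨differentiable_valueFn hc.ne', deriv_valueFn_eq_min hc ▸ by fun_prop⟩

theorem convexOn_valueFn (hc : 0 < c) : ConvexOn ℝ Set.univ (valueFn c) := by
  refine Monotone.convexOn_univ_of_deriv (differentiable_valueFn hc.ne') ?_
  rw [deriv_valueFn_eq_min hc]
  exact fun x y hxy => min_le_min_right 1 (exp_le_exp.2 (by gcongr))

theorem deriv_deriv_valueFn_of_lt (hc : c ≠ 0) (hx : x < 1 / c) :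
    deriv (deriv (valueFn c)) x = c * exp (c * x - 1) := by
  rw [deriv_valueFn hc, (ite_lt_eventuallyEq_left hx).deriv_eq]
  exact ((((hasDerivAt_id' x).const_mul c).sub_const 1).exp).deriv.trans (by ring)

theorem deriv_deriv_valueFn_of_gt (hc : c ≠ 0) (hx : 1 / c < x) :
    deriv (deriv (valueFn c)) x = 0 := by
  rw [deriv_valueFn hc, (ite_lt_eventuallyEq_right hx).deriv_eq, deriv_const]

theorem max_lt_valueFn (hc : 0 < c) (hx : x < 1 / c) : max x 0 < valueFn c x := by
  have h_ne : c * x - 1 ≠ 0 := by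
    rw [lt_div_iff₀ hc] at hx
    linarith
  rw [valueFn_of_lt hx]
  refine max_lt ?_ (by positivity)
  rw [lt_div_iff₀ hc]
  linarith [add_one_lt_exp h_ne]

theorem max_le_valueFn (hc : 0 < c) (x : ℝ) : max x 0 ≤ valueFn c x := by
  rcases lt_or_ge x (1 / c) with hx | hx
  · exact (max_lt_valueFn hc hx).le
  · rw [valueFn_of_ge hx]
    exact max_le le_rfl ((one_div_pos.2 hc).le.trans hx)

end ValueFunction

/-- Properties of the auxiliary value function
`v(x) = (1/(ec)) e^{cx}` for `x < 1/c` and `v(x) = x` for `x ≥ 1/c`, with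
`c = √(2r)`, `r > 0`: it is `C¹`, convex, dominates `max(x,0)` (strictly for
`x < 1/c`), is `r`-harmonic below the boundary and strictly superharmonic above. -/
theorem stmt_8 (r c : ℝ) (hr : 0 < r) (hc : c = Real.sqrt (2 * r))
    (v : ℝ → ℝ)
    (hv : ∀ x : ℝ, v x = if x < 1/c then (1 / (Real.exp 1 * c)) * Real.exp (c * x) else x) :
    ContDiff ℝ 1 v ∧
    ConvexOn ℝ Set.univ v ∧
    (∀ x : ℝ, max x 0 ≤ v x) ∧
    (∀ x : ℝ, x < 1/c → max x 0 < v x) ∧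
    (∀ x : ℝ, x < 1/c → (1/2) * deriv (deriv v) x - r * v x = 0) ∧
    (∀ x : ℝ, 1/c < x →
      (1/2) * deriv (deriv v) x - r * v x = -(r * x) ∧ -(r * x) < 0) := by
  have hc0 : 0 < c := hc ▸ sqrt_pos.2 (by linarith)
  have hc_sq : c ^ 2 = 2 * r := hc ▸ sq_sqrt (by linarith)
  obtain rfl : v = valueFn c := by
    ext x
    rw [hv, valueFn, exp_sub]
    congr 1
    field_simp
  refine ⟨contDiff_valueFn hc0, convexOn_valueFn hc0, max_le_valueFn hc0,
    fun x => max_lt_valueFn hc0, fun x hx => ?_, fun x hx => ?_⟩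
  · rw [deriv_deriv_valueFn_of_lt hc0.ne' hx, valueFn_of_lt hx]
    field_simp
    linear_combination exp (c * x - 1) * hc_sq
  · have hx0 : 0 < x := (one_div_pos.2 hc0).trans hx
    rw [deriv_deriv_valueFn_of_gt hc0.ne' hx, valueFn_of_ge hx.le]
    exact ⟨by ring, by nlinarith⟩
end

section
/- Let a > 0, k > 0, γ > 1, and let x* ∈ (0, ∞) be the unique zero of H(x) = γ − e^{−a(x−k)}(γ + a x). Then for every x ∈ (0, x*), (x/x*)^γ · (1 − e^{−a(x*−k)}) > 1 − e^{−a(x−k)}. -/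
/-!
Since `H' x = a e^{-a(x-k)} (γ - 1 + a x) > 0` for `x > 0`, `H` is strictly increasing on
`[0, ∞)` and hence negative on `(0, x*)`. The derivative of `x ↦ x^{-γ} (1 - e^{-a(x-k)})` is
`-x^{-γ-1} H x`, so this function is strictly increasing on `(0, x*]`; comparing its values at
`x` and `x*` and multiplying by `x^γ` gives the inequality.
-/

open Real Set

namespace ExpUtilitySelling

noncomputable def reward (a k x : ℝ) : ℝ := 1 - exp (-(a * (x - k)))

noncomputable def H (a k γ x : ℝ) : ℝ := γ - exp (-(a * (x - k))) * (γ + a * x)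

variable {a k γ : ℝ}

theorem hasDerivAt_exp_neg_mul_sub (a k x : ℝ) :
    HasDerivAt (fun y => exp (-(a * (y - k)))) (-(a * exp (-(a * (x - k))))) x :=
  (((hasDerivAt_id x).sub_const k).const_mul a).neg.exp.congr_deriv
    (by simp only [id, Pi.neg_apply]; ring)

theorem hasDerivAt_reward (x : ℝ) :
    HasDerivAt (reward a k) (a * exp (-(a * (x - k)))) x :=
  ((hasDerivAt_exp_neg_mul_sub a k x).const_sub 1).congr_deriv (neg_neg _)

theorem hasDerivAt_H (x : ℝ) :
    HasDerivAt (H a k γ) (a * exp (-(a * (x - k))) * (γ - 1 + a * x)) x :=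
  ((hasDerivAt_exp_neg_mul_sub a k x).mul
    (((hasDerivAt_id x).const_mul a).const_add γ)).const_sub γ
    |>.congr_deriv (by simp only [id]; ring)

theorem strictMonoOn_H (ha : 0 < a) (hγ : 1 ≤ γ) : StrictMonoOn (H a k γ) (Ici 0) := by
  refine strictMonoOn_of_deriv_pos (convex_Ici 0)
    (fun x _ => (hasDerivAt_H x).continuousAt.continuousWithinAt) fun x hx => ?_
  rw [interior_Ici] at hx
  rw [(hasDerivAt_H x).deriv]
  have : 0 < γ - 1 + a * x := by nlinarith [mem_Ioi.mp hx]
  positivity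

theorem H_neg_of_lt {xs x : ℝ} (ha : 0 < a) (hγ : 1 ≤ γ) (hzero : H a k γ xs = 0)
    (hx₀ : 0 ≤ x) (hx : x < xs) : H a k γ x < 0 :=
  hzero ▸ strictMonoOn_H ha hγ hx₀ (mem_Ici.mpr (hx₀.trans hx.le)) hx

theorem hasDerivAt_reward_mul_rpow_neg {x : ℝ} (hx : 0 < x) :
    HasDerivAt (fun y => reward a k y * y ^ (-γ)) (x ^ (-γ - 1) * -H a k γ x) x := by
  have hpow : x ^ (-γ) = x ^ (-γ - 1) * x := by
    rw [← rpow_add_one hx.ne']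
    ring_nf
  refine ((hasDerivAt_reward x).mul (hasDerivAt_rpow_const (Or.inl hx.ne'))).congr_deriv ?_
  rw [hpow, H, reward]
  ring

theorem strictMonoOn_reward_mul_rpow_neg {xs : ℝ} (ha : 0 < a) (hγ : 1 ≤ γ)
    (hzero : H a k γ xs = 0) : StrictMonoOn (fun y => reward a k y * y ^ (-γ)) (Ioc 0 xs) := by
  refine strictMonoOn_of_deriv_pos (convex_Ioc 0 xs)
    (fun x hx => (hasDerivAt_reward_mul_rpow_neg hx.1).continuousAt.continuousWithinAt)
    fun x hx => ?_
  rw [interior_Ioc] at hx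
  rw [(hasDerivAt_reward_mul_rpow_neg hx.1).deriv]
  have : 0 < -H a k γ x := neg_pos.mpr (H_neg_of_lt ha hγ hzero hx.1.le hx.2)
  have : 0 < x ^ (-γ - 1) := rpow_pos_of_pos hx.1 _
  positivity

theorem reward_lt_rpow_mul_reward {xs x : ℝ} (ha : 0 < a) (hγ : 1 ≤ γ)
    (hzero : H a k γ xs = 0) (hx : x ∈ Ioo 0 xs) :
    reward a k x < (x / xs) ^ γ * reward a k xs := by
  have hxs : 0 < xs := hx.1.trans hx.2
  have hmono :=
    strictMonoOn_reward_mul_rpow_neg ha hγ hzero ⟨hx.1, hx.2.le⟩ ⟨hxs, le_rfl⟩ hx.2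
  calc reward a k x = reward a k x * x ^ (-γ) * x ^ γ := by
        rw [mul_assoc, ← rpow_add hx.1, neg_add_cancel, rpow_zero, mul_one]
    _ < reward a k xs * xs ^ (-γ) * x ^ γ :=
        mul_lt_mul_of_pos_right hmono (rpow_pos_of_pos hx.1 γ)
    _ = (x / xs) ^ γ * reward a k xs := by
        rw [div_rpow hx.1.le hxs.le, rpow_neg hxs.le]
        field_simp

end ExpUtilitySelling

open ExpUtilitySelling in
theorem stmt_10_general (a k γ xs : ℝ) (ha : 0 < a) (hγ : 1 < γ)
    (hzero : γ - Real.exp (-(a * (xs - k))) * (γ + a * xs) = 0) :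
    ∀ x ∈ Set.Ioo (0:ℝ) xs,
      1 - Real.exp (-(a * (x - k))) <
        (x / xs) ^ γ * (1 - Real.exp (-(a * (xs - k)))) :=
  fun _ hx => reward_lt_rpow_mul_reward ha hγ.le hzero hx

/-- If `x*` is the unique positive zero of `H(x) = γ − e^{−a(x−k)}(γ + ax)`
(`a > 0`, `k > 0`, `γ > 1`), then on the continuation region `(0, x*)` the candidate
value `(x/x*)^γ (1 − e^{−a(x*−k)})` strictly dominates the reward `1 − e^{−a(x−k)}`. -/
theorem stmt_10 (a k γ xs : ℝ) (ha : 0 < a) (hk : 0 < k) (hγ : 1 < γ)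
    (hxs : 0 < xs)
    (hzero : γ - Real.exp (-(a * (xs - k))) * (γ + a * xs) = 0)
    (huniq : ∀ y : ℝ, 0 < y →
      γ - Real.exp (-(a * (y - k))) * (γ + a * y) = 0 → y = xs) :
    ∀ x ∈ Set.Ioo (0:ℝ) xs,
      1 - Real.exp (-(a * (x - k))) <
        (x / xs) ^ γ * (1 - Real.exp (-(a * (xs - k)))) :=
  stmt_10_general a k γ xs ha hγ hzero
end
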